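/- arXiv:0807.3401 — 4 statements merged into one kernel-verified Lean document; each statement's English description precedes it below -/
import Mathlib

section
/- In any unital *-algebra A over ℂ with elements a, b, c, d satisfying the Heisenberg–Lorentz relations (a,b,c,d pairwise commute, ad − bc = 1, aa* − a*a = −s·c*c, ab* − b*a = −s·c·d*, ac* = c*a, ad* = d*a, bb* − b*b = s(a*a − dd*), bc* = c*b, bd* − d*b = s·c*·a, cc* = c*c, cd* = d*c, dd* − d*d = s·c·c*), the element c*c is central: it commutes with a, b, c, d and with a*, b*, c*, d*. -/
/-- The Heisenberg–Lorentz relations for a quadruple `(a, b, c, d)` in a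
unital `*`-algebra over `ℂ`, with deformation parameter `s : ℝ`. -/
def HLRel {A : Type*} [Ring A] [StarRing A] [Algebra ℂ A] (s : ℝ) (a b c d : A) : Prop :=
  a * b = b * a ∧ a * c = c * a ∧ a * d = d * a ∧
  b * c = c * b ∧ b * d = d * b ∧ c * d = d * c ∧
  a * d - b * c = 1 ∧
  a * star a - star a * a = -((s : ℂ) • (star c * c)) ∧
  a * star b - star b * a = -((s : ℂ) • (c * star d)) ∧
  a * star c = star c * a ∧
  a * star d = star d * a ∧
  b * star b - star b * b = (s : ℂ) • (star a * a - d * star d) ∧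
  b * star c = star c * b ∧
  b * star d - star d * b = (s : ℂ) • (star c * a) ∧
  c * star c = star c * c ∧
  c * star d = star d * c ∧
  d * star d - star d * d = (s : ℂ) • (c * star c)

theorem commute_star_mul_self_and_star_of_commute {R : Type*} [Semigroup R] [StarMul R]
    {x y : R} (hx : Commute x y) (hsx : Commute (star x) y) :
    Commute (star x * x) y ∧ Commute (star x * x) (star y) :=
  ⟨hsx.mul_left hx, hx.star_star.mul_left hsx.star_right⟩

theorem stmt_7 {A : Type*} [Ring A] [StarRing A] [Algebra ℂ A]
    (s : ℝ) (a b c d : A) (h : HLRel s a b c d) :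
    Commute (star c * c) a ∧ Commute (star c * c) b ∧
    Commute (star c * c) c ∧ Commute (star c * c) d ∧
    Commute (star c * c) (star a) ∧ Commute (star c * c) (star b) ∧
    Commute (star c * c) (star c) ∧ Commute (star c * c) (star d) := by
  obtain ⟨-, hac, -, hbc, -, hcd, -, -, -, hacs, -, -, hbcs, -, hccs, hcds, -⟩ := h
  obtain ⟨ha, has⟩ := commute_star_mul_self_and_star_of_commute hac.symm hacs.symm
  obtain ⟨hb, hbs⟩ := commute_star_mul_self_and_star_of_commute hbc.symm hbcs.symm
  obtain ⟨hc, hcs⟩ := commute_star_mul_self_and_star_of_commute (Commute.refl c) hccs.symm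
  obtain ⟨hd, hds⟩ :=
    commute_star_mul_self_and_star_of_commute hcd (Commute.star_left (y := d) hcds)
  exact ⟨ha, hb, hc, hd, has, hbs, hcs, hds⟩
end

section
/- Let A be the unital *-algebra generated by a, b, c, d subject to the Heisenberg–Lorentz relations. Then the assignment Δ(a) = a⊗a + b⊗c, Δ(b) = a⊗b + b⊗d, Δ(c) = c⊗a + d⊗c, Δ(d) = c⊗b + d⊗d extends to a *-homomorphism Δ : A → A ⊗ A, i.e., the images Δ(a), Δ(b), Δ(c), Δ(d) again satisfy the Heisenberg–Lorentz relations in A ⊗ A. -/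
open scoped TensorProduct

/-- The Heisenberg–Lorentz relations for a quadruple `(a, b, c, d)` in a unital
ring `B`, relative to a given `*`-operation `st` and real scalar action,
with deformation parameter `s : ℝ`. -/
def HLRelWith {B : Type*} [Ring B] [Module ℝ B] (s : ℝ) (st : B → B) (a b c d : B) : Prop :=
  a * b = b * a ∧ a * c = c * a ∧ a * d = d * a ∧
  b * c = c * b ∧ b * d = d * b ∧ c * d = d * c ∧
  a * d - b * c = 1 ∧
  a * st a - st a * a = -(s • (st c * c)) ∧
  a * st b - st b * a = -(s • (c * st d)) ∧
  a * st c = st c * a ∧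
  a * st d = st d * a ∧
  b * st b - st b * b = s • (st a * a - d * st d) ∧
  b * st c = st c * b ∧
  b * st d - st d * b = s • (st c * a) ∧
  c * st c = st c * c ∧
  c * st d = st d * c ∧
  d * st d - st d * d = s • (c * st c)

/-- The star operation on `A`, as an `ℝ`-linear map. -/
noncomputable def starLM (A : Type*) [Ring A] [StarRing A] [Algebra ℝ A] [StarModule ℝ A] :
    A →ₗ[ℝ] A where
  toFun := star
  map_add' := star_add
  map_smul' r x := by simp

/-- The star operation on the algebraic tensor product `A ⊗ A`,
determined by `(x ⊗ y)* = x* ⊗ y*`. -/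
noncomputable def starTensor (A : Type*) [Ring A] [StarRing A] [Algebra ℝ A] [StarModule ℝ A] :
    A ⊗[ℝ] A → A ⊗[ℝ] A :=
  TensorProduct.map (starLM A) (starLM A)

/-!
The relations split into two independent families. The first (pairwise commutation and
`ad - bc = 1`) is that of `SL₂`: pure tensors of pairwise commuting elements commute, and the
determinant of the comultiplied matrix is `(ad - bc) ⊗ (ad - bc)`. The second family, relating
the generators to their adjoints, is preserved on its own: together with its adjoint it lets one
rewrite every product `x * star y` of generators as `star y * x` plus an `s`-correction, and
after this normal ordering both sides of each relation in `A ⊗ A` are the same real linear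
combination of pure tensors.
-/

section

variable {B : Type*} [Ring B]

def SL2Rel (a b c d : B) : Prop :=
  Commute a b ∧ Commute a c ∧ Commute a d ∧ Commute b c ∧ Commute b d ∧ Commute c d ∧
  a * d - b * c = 1

def HLCrossRel [Module ℝ B] (s : ℝ) (st : B → B) (a b c d : B) : Prop :=
  a * st a - st a * a = -(s • (st c * c)) ∧
  a * st b - st b * a = -(s • (c * st d)) ∧
  a * st c = st c * a ∧
  a * st d = st d * a ∧
  b * st b - st b * b = s • (st a * a - d * st d) ∧
  b * st c = st c * b ∧
  b * st d - st d * b = s • (st c * a) ∧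
  c * st c = st c * c ∧
  c * st d = st d * c ∧
  d * st d - st d * d = s • (c * st c)

theorem hlRelWith_iff [Module ℝ B] {s : ℝ} {st : B → B} {a b c d : B} :
    HLRelWith s st a b c d ↔ SL2Rel a b c d ∧ HLCrossRel s st a b c d := by
  simp only [HLRelWith, SL2Rel, HLCrossRel, Commute, SemiconjBy, and_assoc]

end

theorem SL2Rel.comul {R B : Type*} [CommSemiring R] [Ring B] [Algebra R B] {a b c d : B}
    (h : SL2Rel a b c d) :
    SL2Rel (a ⊗ₜ[R] a + b ⊗ₜ[R] c) (a ⊗ₜ[R] b + b ⊗ₜ[R] d)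
      (c ⊗ₜ[R] a + d ⊗ₜ[R] c) (c ⊗ₜ[R] b + d ⊗ₜ[R] d) := by
  obtain ⟨hab, hac, had, hbc, hbd, hcd, hdet⟩ := h
  have hgen : ∀ x ∈ ({a, b, c, d} : Set B), ∀ y ∈ ({a, b, c, d} : Set B), Commute x y := by
    simp only [Set.mem_insert_iff, Set.mem_singleton_iff]
    rintro x (rfl | rfl | rfl | rfl) y (rfl | rfl | rfl | rfl) <;>
      first | exact Commute.refl _ | assumption | exact Commute.symm ‹_›
  have hdet' : (a ⊗ₜ[R] a + b ⊗ₜ[R] c) * (c ⊗ₜ[R] b + d ⊗ₜ[R] d) -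
      (a ⊗ₜ[R] b + b ⊗ₜ[R] d) * (c ⊗ₜ[R] a + d ⊗ₜ[R] c) = 1 :=
    calc _ = (a * d - b * c) ⊗ₜ[R] (a * d - b * c) := by
          simp only [add_mul, mul_add, Algebra.TensorProduct.tmul_mul_tmul, hab.symm.eq,
            hbc.symm.eq, had.symm.eq, hcd.symm.eq, TensorProduct.tmul_sub, TensorProduct.sub_tmul]
          abel
      _ = 1 := by rw [hdet, Algebra.TensorProduct.one_def]
  refine ⟨?_, ?_, ?_, ?_, ?_, ?_, hdet'⟩ <;>
  · apply Commute.add_left <;> apply Commute.add_right <;>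
    · apply Commute.tmul <;> apply hgen <;> simp

section

variable {A : Type*} [Ring A] [StarRing A] [Algebra ℝ A] [StarModule ℝ A]

theorem starTensor_add (x y : A ⊗[ℝ] A) : starTensor A (x + y) = starTensor A x + starTensor A y :=
  map_add _ x y

theorem starTensor_tmul (x y : A) : starTensor A (x ⊗ₜ[ℝ] y) = star x ⊗ₜ[ℝ] star y := rfl

theorem HLCrossRel.reverse {s : ℝ} {a b c d : A} (h : HLCrossRel s star a b c d) :
    b * star a - star a * b = -(s • (d * star c)) ∧ c * star a = star a * c ∧
    d * star a = star a * d ∧ c * star b = star b * c ∧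
    d * star b - star b * d = s • (star a * c) ∧ d * star c = star c * d := by
  obtain ⟨-, hab, hac, had, -, hbc, hbd, -, hcd, -⟩ := h
  refine ⟨?_, ?_, ?_, ?_, ?_, ?_⟩
  · simpa [star_mul] using congrArg star hab
  · simpa [star_mul] using congrArg star hac
  · simpa [star_mul] using congrArg star had
  · simpa [star_mul] using congrArg star hbc
  · simpa [star_mul] using congrArg star hbd
  · simpa [star_mul] using congrArg star hcd

theorem HLCrossRel.comul {s : ℝ} {a b c d : A} (h : HLCrossRel s star a b c d) :
    HLCrossRel s (starTensor A) (a ⊗ₜ[ℝ] a + b ⊗ₜ[ℝ] c) (a ⊗ₜ[ℝ] b + b ⊗ₜ[ℝ] d)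
      (c ⊗ₜ[ℝ] a + d ⊗ₜ[ℝ] c) (c ⊗ₜ[ℝ] b + d ⊗ₜ[ℝ] d) := by
  obtain ⟨hba, hca, hda, hcb, hdb, hdc⟩ := h.reverse
  obtain ⟨haa, hab, hac, had, hbb, hbc, hbd, hcc, hcd, hdd⟩ := h
  simp only [HLCrossRel, starTensor_add, starTensor_tmul]
  refine ⟨?_, ?_, ?_, ?_, ?_, ?_, ?_, ?_, ?_, ?_⟩ <;>
  · simp only [mul_add, add_mul, Algebra.TensorProduct.tmul_mul_tmul,
      eq_add_of_sub_eq haa, eq_add_of_sub_eq hab, hac, had, eq_add_of_sub_eq hbb, hbc,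
      eq_add_of_sub_eq hbd, hcc, hcd, eq_add_of_sub_eq hdd,
      eq_add_of_sub_eq hba, hca, hda, hcb, eq_add_of_sub_eq hdb, hdc,
      TensorProduct.tmul_add, TensorProduct.add_tmul, TensorProduct.tmul_sub, TensorProduct.sub_tmul,
      TensorProduct.neg_tmul, TensorProduct.tmul_neg, ← TensorProduct.smul_tmul', TensorProduct.tmul_smul]
    module

end

theorem stmt_9 {A : Type*} [Ring A] [StarRing A] [Algebra ℝ A] [StarModule ℝ A]
    (s : ℝ) (a b c d : A) (h : HLRelWith s (star : A → A) a b c d) :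
    HLRelWith s (starTensor A)
      (a ⊗ₜ[ℝ] a + b ⊗ₜ[ℝ] c) (a ⊗ₜ[ℝ] b + b ⊗ₜ[ℝ] d)
      (c ⊗ₜ[ℝ] a + d ⊗ₜ[ℝ] c) (c ⊗ₜ[ℝ] b + d ⊗ₜ[ℝ] d) := by
  rw [hlRelWith_iff] at h ⊢
  exact ⟨h.1.comul, h.2.comul⟩
end

section
/- The coinverse relations hold: in the opposite algebra, the quadruple (d, −b, −c, a) satisfies the Heisenberg–Lorentz relations whenever (a, b, c, d) does; equivalently, the assignment κ(a) = d, κ(b) = −b, κ(c) = −c, κ(d) = a extends to a *-antihomomorphism of the Heisenberg–Lorentz *-algebra, and κ² = id on generators. -/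
section StarCommutator

variable {A : Type*} [Ring A] [StarRing A]

theorem mul_star_comm_of_mul_star_comm {x y : A} (h : x * star y = star y * x) :
    y * star x = star x * y := by
  simpa only [star_mul, star_star] using congrArg star h

theorem mul_star_sub_star_mul_eq_star {x y r : A} (h : x * star y - star y * x = r) :
    y * star x - star x * y = star r := by
  rw [← h, star_sub, star_mul, star_mul, star_star]

theorem star_ofReal_smul [Algebra ℂ A] [StarModule ℂ A] (t : ℝ) (x : A) :
    star ((t : ℂ) • x) = (t : ℂ) • star x := by
  rw [star_smul, Complex.star_def, Complex.conj_ofReal]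

end StarCommutator

open MulOpposite in
theorem stmt_11 {A : Type*} [Ring A] [StarRing A] [Algebra ℂ A] [StarModule ℂ A]
    (s : ℝ) (a b c d : A) (h : HLRel s a b c d) :
    HLRel s (op d) (-(op b)) (-(op c)) (op a) := by
  obtain ⟨hab, hac, had, hbc, hbd, hcd, hdet, hasa, hasb, hasc, hasd, hbsb, hbsc, hbsd, hcsc, hcsd,
    hdsd⟩ := h
  have hbsa := mul_star_sub_star_mul_eq_star hasb
  have hdsb := mul_star_sub_star_mul_eq_star hbsd
  simp only [star_neg, star_ofReal_smul, star_mul, star_star] at hbsa hdsb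
  refine ⟨?_, ?_, ?_, ?_, ?_, ?_, ?_, ?_, ?_, ?_, ?_, ?_, ?_, ?_, ?_, ?_, ?_⟩ <;>
    apply unop_injective <;>
    simp only [unop_mul, unop_neg, unop_star, unop_smul, unop_sub, unop_one, unop_op,
      neg_mul, mul_neg, neg_neg, star_neg, neg_inj, neg_sub_neg, smul_neg]
  · exact hbd
  · exact hcd
  · exact had
  · exact hbc.symm
  · exact hab
  · exact hac
  · rwa [← hbc]
  · rw [← neg_sub, hdsd]
  · exact hdsb
  · exact (mul_star_comm_of_mul_star_comm hcsd).symm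
  · exact (mul_star_comm_of_mul_star_comm hasd).symm
  · rw [← neg_sub, hbsb, ← smul_neg, neg_sub]
  · exact hbsc.symm
  · exact hbsa
  · exact hcsc.symm
  · exact (mul_star_comm_of_mul_star_comm hasc).symm
  · rw [← neg_sub, hasa, neg_neg]
end

section
/- The function f : ℂ × ℂ → ℂ given by the double Gaussian–Fresnel integral f(α, δ) = ∫∫ h₁(z₁, −(s/2)γ²)·h₁(z₂, (s/2)γ²)·exp(i·Im(z₁α))·exp(i·Im(z₂δ)) d²z₁ d²z₂ equals (1/cosh²((s/2)γ²))·exp(−2(|α|² + |δ|²)·tanh((s/2)γ²)/(s·γ²)), where γ² > 0 and s ≠ 0 are fixed reals and h_t(z,x) = (x e^{tx}/(4π sinh tx))·exp(−|z|² x coth(tx)/4). -/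
/-!
With `m = sγ²/2`, both kernels `h₁(·, ∓m)` are Gaussians `K e^{-c|z|²}` of the same width
`c = m coth m / 4 > 0`, so the double integral factors into two Fourier transforms of a Gaussian
on `ℂ ≅ ℝ²`. Writing `Im(zβ) = ⟪i β̄, z⟫_ℝ`, each equals `K (π / c) e^{-|β|²/(4c)}`, which
simplifies to `e^{∓m} / cosh m · e^{-|β|² tanh m / m}`; the prefactors multiply to `1 / cosh² m`.
-/

open MeasureTheory Real

/-- `h_t(z,x) = (x e^{tx}/(4π sinh tx)) exp(−|z|² x coth(tx)/4)`. -/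
noncomputable def hker (t : ℝ) (z : ℂ) (x : ℝ) : ℝ :=
  (x * Real.exp (t * x) / (4 * Real.pi * Real.sinh (t * x))) *
    Real.exp (-(‖z‖ ^ 2 * x * (Real.cosh (t * x) / Real.sinh (t * x))) / 4)

open Complex ComplexConjugate

lemma Complex.im_mul_eq_inner (z β : ℂ) : (z * β).im = inner ℝ (I * conj β) z := by
  rw [Complex.inner]
  simp only [mul_re, mul_im, I_re, I_im, conj_re, conj_im]
  ring

theorem integral_cexp_neg_mul_sq_norm_mul_cexp_I_mul_im {b : ℂ} (hb : 0 < b.re) (β : ℂ) :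
    ∫ z : ℂ, cexp (-b * ‖z‖ ^ 2) * cexp (I * (z * β).im) = π / b * cexp (-‖β‖ ^ 2 / (4 * b)) := by
  have h := GaussianFourier.integral_cexp_neg_mul_sq_norm_add hb I (I * conj β)
  simp only [finrank_real_complex, norm_mul, norm_I, norm_conj, one_mul] at h
  simp_rw [← Complex.exp_add, im_mul_eq_inner, h]
  norm_num [neg_div]

lemma div_sinh_mul_pos {t x : ℝ} (ht : 0 < t) (hx : x ≠ 0) : 0 < x / Real.sinh (t * x) := by
  rcases hx.lt_or_gt with hx | hx
  · exact div_pos_of_neg_of_neg hx (Real.sinh_neg_iff.2 (mul_neg_of_pos_of_neg ht hx))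
  · exact div_pos hx (Real.sinh_pos_iff.2 (mul_pos ht hx))

lemma ofReal_hker (t : ℝ) (z : ℂ) (x : ℝ) :
    (hker t z x : ℂ) = (x * Real.exp (t * x) / (4 * π * Real.sinh (t * x)) : ℝ) *
      cexp (-(x * Real.cosh (t * x) / Real.sinh (t * x) / 4 : ℝ) * ‖z‖ ^ 2) := by
  rw [hker, ofReal_mul, ofReal_exp]
  congr 2
  push_cast
  ring

theorem integral_hker_mul_cexp_I_mul_im {t x : ℝ} (ht : 0 < t) (hx : x ≠ 0) (β : ℂ) :
    ∫ z : ℂ, (hker t z x : ℂ) * cexp (I * (z * β).im) =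
      (Real.exp (t * x) / Real.cosh (t * x) : ℝ) *
        cexp (-(‖β‖ ^ 2 * Real.tanh (t * x) / x : ℝ)) := by
  have hc : 0 < x * Real.cosh (t * x) / Real.sinh (t * x) / 4 := by
    have := div_sinh_mul_pos ht hx
    rw [mul_div_right_comm]
    positivity
  simp_rw [ofReal_hker, mul_assoc, integral_const_mul]
  rw [integral_cexp_neg_mul_sq_norm_mul_cexp_I_mul_im (by rwa [ofReal_re]), ← mul_assoc]
  have hcosh := (Real.cosh_pos (t * x)).ne'
  congr 1
  · rw [← ofReal_div, ← ofReal_mul]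
    congr 1
    field_simp
  · rw [← ofReal_pow, ← ofReal_ofNat, ← ofReal_mul, ← ofReal_neg, ← ofReal_div, ← ofReal_neg]
    congr 2
    rw [Real.tanh_eq_sinh_div_cosh]
    field_simp

theorem stmt_14 (s g : ℝ) (hs : s ≠ 0) (hg : 0 < g) (α δ : ℂ) :
    (∫ z₁ : ℂ, ∫ z₂ : ℂ,
        ((hker 1 z₁ (-(s / 2) * g) * hker 1 z₂ ((s / 2) * g) : ℝ) : ℂ) *
          Complex.exp (Complex.I * ((z₁ * α).im : ℂ)) *
          Complex.exp (Complex.I * ((z₂ * δ).im : ℂ))) =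
      ((1 / (Real.cosh ((s / 2) * g)) ^ 2 : ℝ) : ℂ) *
        Complex.exp
          (((-(2 * (‖α‖ ^ 2 + ‖δ‖ ^ 2) *
              Real.tanh ((s / 2) * g)) / (s * g) : ℝ) : ℂ)) := by
  set m := s / 2 * g with hm
  have hm0 : m ≠ 0 := by positivity
  have hsplit : ∀ z₁ z₂ : ℂ,
      ((hker 1 z₁ (-m) * hker 1 z₂ m : ℝ) : ℂ) * cexp (I * (z₁ * α).im) * cexp (I * (z₂ * δ).im) =
        ((hker 1 z₁ (-m) : ℂ) * cexp (I * (z₁ * α).im)) *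
          ((hker 1 z₂ m : ℂ) * cexp (I * (z₂ * δ).im)) := by
    intro z₁ z₂
    push_cast
    ring
  -- the integrand is a product, so pulling out constants factors the double integral (no Fubini)
  simp_rw [neg_mul, ← hm, hsplit, integral_const_mul, integral_mul_const,
    integral_hker_mul_cexp_I_mul_im one_pos (neg_ne_zero.2 hm0),
    integral_hker_mul_cexp_I_mul_im one_pos hm0, one_mul, Real.cosh_neg, Real.tanh_neg]
  rw [show s * g = 2 * m by rw [hm]; ring, mul_mul_mul_comm, ← ofReal_mul, ← Complex.exp_add, ← ofReal_neg, ← ofReal_neg,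
    ← ofReal_add]
  have hcosh := (Real.cosh_pos m).ne'
  congr 2
  · rw [Real.exp_neg]
    field_simp
  · congr 1
    field_simp
    ring
end
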